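/- Let 𝒵ₙ be the 2^{d-1}-point half-fraction design at the points (±1/2,...,±1/2) with an even number of minus signs, and 𝒵'ₘ the full 2^d-point factorial design at (±1/2,...,±1/2). Then for every d ≥ 3, the normalized covering radii satisfy n^{1/d}·CR(𝒵ₙ) = 2^{-1/d}√(d+8) > √d = m^{1/d}·CR(𝒵'ₘ), where n = 2^{d-1} and m = 2^d. -/

import Mathlib

/-!
Rounding each coordinate of a point of `[-1,1]^d` to the nearer of `±1/2` costs at most `1/4` in
each squared coordinate, so the full factorial design covers the cube within `√d/2`, and the
vertex `(1,…,1)` is that far from every design point. For the half-fraction design the rounded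
point may have an odd number of minus signs; flipping the first coordinate repairs the parity at a
squared cost of at most `9/4`, giving `(d+8)/4`, and a vertex with an odd number of `-1`s attains
it, since it disagrees in sign with every design point somewhere. Parity is tracked by the product
of the signs `2 Zᵢ = ±1`. Finally the strict inequality amounts to `2^{2/d} < 1 + 8/d`, and
Bernoulli gives `(1 + 8/d)^d ≥ 9 > 4`.
-/

open scoped Classical

/-- The covering radius of a set of points `D` relative to the cube `[-1,1]^d`. -/
noncomputable def coveringRadius (d : ℕ) (D : Set (EuclideanSpace ℝ (Fin d))) : ℝ :=
  ⨆ X : {X : EuclideanSpace ℝ (Fin d) // ∀ i, X i ∈ Set.Icc (-1 : ℝ) 1},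
    ⨅ Z : D, dist (X : EuclideanSpace ℝ (Fin d)) (Z : EuclideanSpace ℝ (Fin d))

/-- The half-fraction design: points `(±1/2,…,±1/2)` with an even number of
negative coordinates; it has `n = 2^{d-1}` points. -/
def halfFractionDesign (d : ℕ) : Set (EuclideanSpace ℝ (Fin d)) :=
  {Z | (∀ i, Z i = 1 / 2 ∨ Z i = -(1 / 2)) ∧
    Even (Finset.univ.filter (fun i => Z i = -(1 / 2))).card}

/-- The full factorial design: all `m = 2^d` points `(±1/2,…,±1/2)`. -/
def fullFactorialDesign (d : ℕ) : Set (EuclideanSpace ℝ (Fin d)) :=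
  {Z | ∀ i, Z i = 1 / 2 ∨ Z i = -(1 / 2)}

lemma coveringRadius_eq {d : ℕ} {D : Set (EuclideanSpace ℝ (Fin d))} {r : ℝ}
    (hcover : ∀ X : EuclideanSpace ℝ (Fin d), (∀ i, X i ∈ Set.Icc (-1 : ℝ) 1) →
      ∃ Z ∈ D, dist X Z ≤ r)
    (X₀ : EuclideanSpace ℝ (Fin d)) (hX₀ : ∀ i, X₀ i ∈ Set.Icc (-1 : ℝ) 1)
    (hfar : ∀ Z ∈ D, r ≤ dist X₀ Z) :
    coveringRadius d D = r := by
  have hD : Nonempty D := by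
    obtain ⟨Z, hZ, -⟩ := hcover X₀ hX₀
    exact ⟨⟨Z, hZ⟩⟩
  have hcube : Nonempty {X : EuclideanSpace ℝ (Fin d) // ∀ i, X i ∈ Set.Icc (-1 : ℝ) 1} :=
    ⟨⟨X₀, hX₀⟩⟩
  have hinf_le : ∀ X : {X : EuclideanSpace ℝ (Fin d) // ∀ i, X i ∈ Set.Icc (-1 : ℝ) 1},
      ⨅ Z : D, dist (X : EuclideanSpace ℝ (Fin d)) Z ≤ r := by
    rintro ⟨X, hX⟩
    obtain ⟨Z, hZ, hXZ⟩ := hcover X hX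
    exact ciInf_le_of_le ⟨0, by rintro _ ⟨_, rfl⟩; exact dist_nonneg⟩ ⟨Z, hZ⟩ hXZ
  refine le_antisymm (ciSup_le hinf_le) ?_
  exact le_ciSup_of_le ⟨r, by rintro _ ⟨X, rfl⟩; exact hinf_le X⟩ ⟨X₀, hX₀⟩
    (le_ciInf fun Z => hfar Z Z.2)

lemma coveringRadius_eq_sqrt {d : ℕ} {D : Set (EuclideanSpace ℝ (Fin d))} {s : ℝ}
    (hcover : ∀ X : EuclideanSpace ℝ (Fin d), (∀ i, X i ∈ Set.Icc (-1 : ℝ) 1) →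
      ∃ Z ∈ D, ∑ i, (X i - Z i) ^ 2 ≤ s)
    (X₀ : EuclideanSpace ℝ (Fin d)) (hX₀ : ∀ i, X₀ i ∈ Set.Icc (-1 : ℝ) 1)
    (hfar : ∀ Z ∈ D, s ≤ ∑ i, (X₀ i - Z i) ^ 2) :
    coveringRadius d D = √s := by
  have hdist (X Z : EuclideanSpace ℝ (Fin d)) : dist X Z = √(∑ i, (X i - Z i) ^ 2) := by
    simp only [EuclideanSpace.dist_eq, Real.dist_eq, sq_abs]
  refine coveringRadius_eq (fun X hX => ?_) X₀ hX₀ fun Z hZ => ?_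
  · obtain ⟨Z, hZ, hXZ⟩ := hcover X hX
    exact ⟨Z, hZ, hdist X Z ▸ Real.sqrt_le_sqrt hXZ⟩
  · exact hdist X₀ Z ▸ Real.sqrt_le_sqrt (hfar Z hZ)

section Coordinate

variable {x z : ℝ}

noncomputable def nearestHalf (x : ℝ) : ℝ := if 0 ≤ x then 1 / 2 else -(1 / 2)

lemma nearestHalf_eq (x : ℝ) : nearestHalf x = 1 / 2 ∨ nearestHalf x = -(1 / 2) := by
  unfold nearestHalf; split_ifs <;> simp only [true_or, or_true]

lemma sq_sub_nearestHalf_le (hx : x ∈ Set.Icc (-1 : ℝ) 1) :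
    (x - nearestHalf x) ^ 2 ≤ 1 / 4 := by
  obtain ⟨h₁, h₂⟩ := hx
  unfold nearestHalf; split_ifs <;> nlinarith

lemma sq_sub_le_nine_div_four (hx : x ∈ Set.Icc (-1 : ℝ) 1) (hz : z = 1 / 2 ∨ z = -(1 / 2)) :
    (x - z) ^ 2 ≤ 9 / 4 := by
  obtain ⟨h₁, h₂⟩ := hx
  rcases hz with rfl | rfl <;> nlinarith

lemma one_div_four_le_sq_sub (hx : x = 1 ∨ x = -1) (hz : z = 1 / 2 ∨ z = -(1 / 2)) :
    1 / 4 ≤ (x - z) ^ 2 := by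
  rcases hx with rfl | rfl <;> rcases hz with rfl | rfl <;> norm_num

lemma nine_div_four_le_sq_sub (hx : x = 1 ∨ x = -1) (hz : z = 1 / 2 ∨ z = -(1 / 2))
    (hxz : x ≠ 2 * z) : 9 / 4 ≤ (x - z) ^ 2 := by
  rcases hx with rfl | rfl <;> rcases hz with rfl | rfl <;> norm_num at *

end Coordinate

lemma prod_two_mul_eq_neg_one_pow {ι : Type*} [Fintype ι] (z : ι → ℝ)
    (hz : ∀ i, z i = 1 / 2 ∨ z i = -(1 / 2)) :
    ∏ i, 2 * z i = (-1) ^ (Finset.univ.filter (fun i => z i = -(1 / 2))).card := by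
  rw [← Finset.prod_const, Finset.prod_filter]
  refine Finset.prod_congr rfl fun i _ => ?_
  rcases hz i with h | h <;> norm_num [h]

lemma mem_halfFractionDesign_iff {d : ℕ} {Z : EuclideanSpace ℝ (Fin d)} :
    Z ∈ halfFractionDesign d ↔ Z ∈ fullFactorialDesign d ∧ ∏ i, 2 * Z i = 1 := by
  refine and_congr_right fun hZ => ?_
  rw [prod_two_mul_eq_neg_one_pow _ hZ, neg_one_pow_eq_one_iff_even (by norm_num)]

lemma coveringRadius_fullFactorialDesign (d : ℕ) :
    coveringRadius d (fullFactorialDesign d) = √d / 2 := by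
  rw [show √d / 2 = √(d / 4) by rw [Real.sqrt_div' _ zero_le_four]; norm_num]
  refine coveringRadius_eq_sqrt (fun X hX => ?_) (WithLp.toLp 2 fun _ => 1) (fun _ => by simp)
    fun Z hZ => ?_
  · refine ⟨WithLp.toLp 2 fun i => nearestHalf (X i), fun i => nearestHalf_eq _, ?_⟩
    calc ∑ i, (X i - nearestHalf (X i)) ^ 2 ≤ ∑ _i : Fin d, (1 / 4 : ℝ) :=
          Finset.sum_le_sum fun i _ => sq_sub_nearestHalf_le (hX i)
      _ = d / 4 := by simp; ring
  · calc (d / 4 : ℝ) = ∑ _i : Fin d, (1 / 4 : ℝ) := by simp; ring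
      _ ≤ _ := Finset.sum_le_sum fun i _ => one_div_four_le_sq_sub (by simp) (hZ i)

lemma sum_one_div_four_add_ite_eq {d : ℕ} (j : Fin d) :
    ∑ i, (1 / 4 + if i = j then 2 else 0 : ℝ) = (d + 8) / 4 := by
  simp only [Finset.sum_add_distrib, Finset.sum_ite_eq', Finset.mem_univ, if_true,
    Finset.sum_const, Finset.card_univ, Fintype.card_fin, nsmul_eq_mul]
  ring

lemma exists_mem_halfFractionDesign_sum_sq_le {d : ℕ} (hd : 0 < d)
    (X : EuclideanSpace ℝ (Fin d)) (hX : ∀ i, X i ∈ Set.Icc (-1 : ℝ) 1) :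
    ∃ Z ∈ halfFractionDesign d, ∑ i, (X i - Z i) ^ 2 ≤ (d + 8) / 4 := by
  let i₀ : Fin d := ⟨0, hd⟩
  set p := ∏ i, 2 * nearestHalf (X i) with hp_def
  have hp : p = 1 ∨ p = -1 := by
    rw [hp_def, prod_two_mul_eq_neg_one_pow _ fun i => nearestHalf_eq _]
    exact neg_one_pow_eq_or ℝ _
  let Z : EuclideanSpace ℝ (Fin d) :=
    WithLp.toLp 2 fun i => (if i = i₀ then p else 1) * nearestHalf (X i)
  have hZ : Z ∈ fullFactorialDesign d := fun i => by
    simp only [Z]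
    rcases nearestHalf_eq (X i) with h | h <;> split_ifs <;> rcases hp with hp | hp <;>
      norm_num [h, hp]
  have hZprod : ∏ i, 2 * Z i = 1 := by
    calc ∏ i, 2 * Z i = (∏ i, if i = i₀ then p else 1) * p := by
          rw [hp_def, ← Finset.prod_mul_distrib]
          exact Finset.prod_congr rfl fun i _ => by simp only [Z]; ring
      _ = 1 := by rcases hp with hp | hp <;> simp [hp]
  refine ⟨Z, mem_halfFractionDesign_iff.2 ⟨hZ, hZprod⟩, ?_⟩
  rw [← sum_one_div_four_add_ite_eq i₀]
  refine Finset.sum_le_sum fun i _ => ?_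
  split_ifs with hi
  · linarith [sq_sub_le_nine_div_four (hX i) (hZ i)]
  · have hZi : Z i = nearestHalf (X i) := by simp [Z, hi]
    linarith [hZi ▸ sq_sub_nearestHalf_le (hX i)]

lemma le_sum_sq_sub_of_mem_halfFractionDesign {d : ℕ} {X Z : EuclideanSpace ℝ (Fin d)}
    (hX : ∀ i, X i = 1 ∨ X i = -1) (hXprod : ∏ i, X i = -1)
    (hZ : Z ∈ halfFractionDesign d) :
    (d + 8) / 4 ≤ ∑ i, (X i - Z i) ^ 2 := by
  obtain ⟨hZ, hZprod⟩ := mem_halfFractionDesign_iff.1 hZ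
  obtain ⟨j, hj⟩ : ∃ j, X j ≠ 2 * Z j := by
    by_contra! h
    rw [Finset.prod_congr rfl fun i _ => h i, hZprod] at hXprod
    norm_num at hXprod
  rw [← sum_one_div_four_add_ite_eq j]
  refine Finset.sum_le_sum fun i _ => ?_
  split_ifs with hi
  · subst hi
    linarith [nine_div_four_le_sq_sub (hX i) (hZ i) hj]
  · linarith [one_div_four_le_sq_sub (hX i) (hZ i)]

lemma coveringRadius_halfFractionDesign {d : ℕ} (hd : 0 < d) :
    coveringRadius d (halfFractionDesign d) = √(d + 8) / 2 := by
  rw [show √(d + 8) / 2 = √((d + 8) / 4) by rw [Real.sqrt_div' _ zero_le_four]; norm_num]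
  let X₀ : EuclideanSpace ℝ (Fin d) := WithLp.toLp 2 fun i => if i = ⟨0, hd⟩ then -1 else 1
  have hX₀ (i : Fin d) : X₀ i = 1 ∨ X₀ i = -1 := by
    simp only [X₀]; split_ifs <;> simp
  refine coveringRadius_eq_sqrt (exists_mem_halfFractionDesign_sum_sq_le hd) X₀
    (fun i => by rcases hX₀ i with h | h <;> norm_num [h])
    fun Z hZ => le_sum_sq_sub_of_mem_halfFractionDesign hX₀ (by simp [X₀]) hZ

lemma two_rpow_inv_natCast_sq_lt {d : ℕ} (hd : d ≠ 0) :
    ((2 : ℝ) ^ (d⁻¹ : ℝ)) ^ 2 < 1 + 8 / d := by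
  have hdR : (d : ℝ) ≠ 0 := Nat.cast_ne_zero.2 hd
  refine lt_of_pow_lt_pow_left₀ d (by positivity) ?_
  calc (((2 : ℝ) ^ (d⁻¹ : ℝ)) ^ 2) ^ d = 4 := by
        rw [← pow_mul, mul_comm, pow_mul, Real.rpow_inv_natCast_pow zero_le_two hd]; norm_num
    _ < 1 + d * (8 / d) := by rw [mul_div_cancel₀ _ hdR]; norm_num
    _ ≤ (1 + 8 / d) ^ d :=
        one_add_mul_le_pow (by linarith [show (0 : ℝ) ≤ 8 / d by positivity]) d

theorem normalized_coveringRadius_comparison (d : ℕ) (hd : 3 ≤ d) :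
    ((2 : ℝ) ^ (d - 1)) ^ ((1 : ℝ) / d) * coveringRadius d (halfFractionDesign d) =
      (2 : ℝ) ^ (-(1 : ℝ) / d) * Real.sqrt (d + 8) ∧
    (2 : ℝ) ^ (-(1 : ℝ) / d) * Real.sqrt (d + 8) > Real.sqrt d ∧
    Real.sqrt d = ((2 : ℝ) ^ d) ^ ((1 : ℝ) / d) * coveringRadius d (fullFactorialDesign d) := by
  have hd₀ : d ≠ 0 := by omega
  set c : ℝ := 2 ^ (d⁻¹ : ℝ) with hc
  have hc₀ : 0 < c := by positivity
  have hroot : ((2 : ℝ) ^ d) ^ ((1 : ℝ) / d) = 2 := by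
    rw [one_div, Real.pow_rpow_inv_natCast zero_le_two hd₀]
  have hneg : (2 : ℝ) ^ (-(1 : ℝ) / d) = c⁻¹ := by
    rw [neg_div, one_div, Real.rpow_neg zero_le_two]
  rw [hneg, coveringRadius_halfFractionDesign (by omega), coveringRadius_fullFactorialDesign,
    hroot, gt_iff_lt, lt_inv_mul_iff₀ hc₀]
  refine ⟨?_, ?_, by ring⟩
  · rw [pow_sub₀ _ two_ne_zero (by omega : 1 ≤ d), pow_one,
      Real.mul_rpow (by positivity) (by positivity), hroot, Real.inv_rpow zero_le_two, one_div,
      ← hc]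
    field_simp
  · rw [Real.lt_sqrt (by positivity), mul_pow, Real.sq_sqrt (Nat.cast_nonneg d)]
    calc c ^ 2 * d < (1 + 8 / d) * d :=
          mul_lt_mul_of_pos_right (two_rpow_inv_natCast_sq_lt hd₀) (by positivity)
      _ = d + 8 := by field_simp
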